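/- Let K be a field, let N ≤ SL₂(K) be the subgroup of monomial matrices, and for (α,β) ∈ K × K let u(α,β) = [[1, α],[β, 1+αβ]] ∈ SL₂(K). Then for all (α,β), (α',β') ∈ K × K the following are equivalent: (i) there exist n₁, n₂ ∈ N with n₁ · u(α,β) · n₂ = u(α',β') (i.e. u(α,β) and u(α',β') lie in the same double coset N g N); (ii) (α,β) and (α',β') are 𝒩-equivalent. -/

import Mathlib

open Matrix

/-- A matrix in `SL₂(K)` is monomial if it is diagonal or antidiagonal. -/
def IsMonomial {K : Type*} [Field K] (A : SpecialLinearGroup (Fin 2) K) : Prop :=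
  ((A : Matrix (Fin 2) (Fin 2) K) 0 1 = 0 ∧ (A : Matrix (Fin 2) (Fin 2) K) 1 0 = 0) ∨
  ((A : Matrix (Fin 2) (Fin 2) K) 0 0 = 0 ∧ (A : Matrix (Fin 2) (Fin 2) K) 1 1 = 0)

/-- `u(α,β) = [[1, α],[β, 1+αβ]] ∈ SL₂(K)`. -/
def uMat {K : Type*} [Field K] (p : K × K) : SpecialLinearGroup (Fin 2) K :=
  ⟨!![1, p.1; p.2, 1 + p.1 * p.2], by rw [Matrix.det_fin_two_of]; ring⟩

/-- The step relation generating the partial action of the group `𝒩` on `K × K`. -/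
def Rstep {K : Type*} [Field K] (p q : K × K) : Prop :=
  (∃ s : K, s ≠ 0 ∧ q = (s ^ 2 * p.1, s⁻¹ ^ 2 * p.2)) ∨
  (p.2 ≠ 0 ∧ q = (p.2⁻¹ * (1 + p.1 * p.2), -p.2)) ∨
  (p.1 ≠ 0 ∧ q = (-p.1⁻¹, p.1 * (1 + p.1 * p.2))) ∨
  (1 + p.1 * p.2 ≠ 0 ∧ q = (-p.2 * (1 + p.1 * p.2)⁻¹, -p.1 * (1 + p.1 * p.2)))

/-!
Every monomial matrix of `SL₂(K)` is diagonal, `diag(s, s⁻¹)`, or antidiagonal. Each generator of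
`𝒩`-equivalence is realised by an explicit pair `m₁, m₂` of monomial matrices with
`m₁ u(p) m₂ = u(q)`; since lying in a common double coset is an equivalence relation, this gives
one direction. Conversely, if `n₁ u(p) n₂ = u(p')`, the entry `1` in the corner of `u(p')` forces
the entry of `u(p)` selected by the shapes of `n₁, n₂` (one of `1, α, β, 1 + αβ`) to be nonzero, so
the generator of matching shape applies to `p`. Composing its witnesses with `n₁, n₂` leaves
diagonal factors on both sides, and two matrices `u(q), u(p')` related by diagonal factors differ
by a scaling `(s²α, s⁻²β)`.
-/

open scoped MatrixGroups

section

variable {K : Type*} [Field K]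

def IsDiagonal (A : SL(2, K)) : Prop := A 0 1 = 0 ∧ A 1 0 = 0

def IsAntidiagonal (A : SL(2, K)) : Prop := A 0 0 = 0 ∧ A 1 1 = 0

theorem isMonomial_iff {A : SL(2, K)} : IsMonomial A ↔ IsDiagonal A ∨ IsAntidiagonal A :=
  Iff.rfl

section Parity

variable {A B : SL(2, K)}

theorem IsDiagonal.mul (hA : IsDiagonal A) (hB : IsDiagonal B) : IsDiagonal (A * B) := by
  simp_all [IsDiagonal, mul_apply, Fin.sum_univ_two]

theorem IsAntidiagonal.mul (hA : IsAntidiagonal A) (hB : IsAntidiagonal B) :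
    IsDiagonal (A * B) := by
  simp_all [IsDiagonal, IsAntidiagonal, mul_apply, Fin.sum_univ_two]

theorem IsDiagonal.mul_isAntidiagonal (hA : IsDiagonal A) (hB : IsAntidiagonal B) :
    IsAntidiagonal (A * B) := by
  simp_all [IsDiagonal, IsAntidiagonal, mul_apply, Fin.sum_univ_two]

theorem IsAntidiagonal.mul_isDiagonal (hA : IsAntidiagonal A) (hB : IsDiagonal B) :
    IsAntidiagonal (A * B) := by
  simp_all [IsDiagonal, IsAntidiagonal, mul_apply, Fin.sum_univ_two]

theorem IsDiagonal.inv (hA : IsDiagonal A) : IsDiagonal A⁻¹ := by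
  simp_all [IsDiagonal, SpecialLinearGroup.SL2_inv_expl]

theorem IsAntidiagonal.inv (hA : IsAntidiagonal A) : IsAntidiagonal A⁻¹ := by
  simp_all [IsAntidiagonal, SpecialLinearGroup.SL2_inv_expl]

theorem IsMonomial.mul (hA : IsMonomial A) (hB : IsMonomial B) : IsMonomial (A * B) := by
  rcases isMonomial_iff.1 hA with hA | hA <;> rcases isMonomial_iff.1 hB with hB | hB
  exacts [.inl (hA.mul hB), .inr (hA.mul_isAntidiagonal hB), .inr (hA.mul_isDiagonal hB),
    .inl (hA.mul hB)]

theorem IsMonomial.inv (hA : IsMonomial A) : IsMonomial A⁻¹ :=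
  hA.imp IsDiagonal.inv IsAntidiagonal.inv

end Parity

def diagSL (s : K) (hs : s ≠ 0) : SL(2, K) :=
  ⟨!![s, 0; 0, s⁻¹], by simp [det_fin_two_of, hs]⟩

def antidiagSL (t : K) (ht : t ≠ 0) : SL(2, K) :=
  ⟨!![0, t; -t⁻¹, 0], by simp [det_fin_two_of, ht]⟩

@[simp]
theorem coe_diagSL (s : K) (hs : s ≠ 0) :
    (diagSL s hs : Matrix (Fin 2) (Fin 2) K) = !![s, 0; 0, s⁻¹] := rfl

@[simp]
theorem coe_antidiagSL (t : K) (ht : t ≠ 0) :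
    (antidiagSL t ht : Matrix (Fin 2) (Fin 2) K) = !![0, t; -t⁻¹, 0] := rfl

@[simp]
theorem coe_uMat (p : K × K) :
    (uMat p : Matrix (Fin 2) (Fin 2) K) = !![1, p.1; p.2, 1 + p.1 * p.2] := rfl

theorem isDiagonal_diagSL (s : K) (hs : s ≠ 0) : IsDiagonal (diagSL s hs) := ⟨rfl, rfl⟩

theorem isAntidiagonal_antidiagSL (t : K) (ht : t ≠ 0) : IsAntidiagonal (antidiagSL t ht) :=
  ⟨rfl, rfl⟩

theorem uMat_injective : Function.Injective (uMat : K × K → SL(2, K)) :=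
  fun p q h ↦ Prod.ext (by simpa using congr_arg (· 0 1) h) (by simpa using congr_arg (· 1 0) h)

section Witnesses

variable (p : K × K)

theorem diagSL_mul_uMat_mul_diagSL {s : K} (hs : s ≠ 0) :
    diagSL s hs * uMat p * diagSL s⁻¹ (inv_ne_zero hs) = uMat (s ^ 2 * p.1, s⁻¹ ^ 2 * p.2) := by
  ext i j
  fin_cases i <;> fin_cases j <;> simp [mul_apply, Fin.sum_univ_two] <;> field_simp

theorem antidiagSL_mul_uMat (hβ : p.2 ≠ 0) :
    antidiagSL p.2⁻¹ (inv_ne_zero hβ) * uMat p = uMat (p.2⁻¹ * (1 + p.1 * p.2), -p.2) := by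
  ext i j
  fin_cases i <;> fin_cases j <;> simp [mul_apply, Fin.sum_univ_two] <;> field_simp
  ring

theorem diagSL_mul_uMat_mul_antidiagSL (hα : p.1 ≠ 0) :
    diagSL p.1⁻¹ (inv_ne_zero hα) * uMat p * antidiagSL (-1) (neg_ne_zero.2 one_ne_zero) =
      uMat (-p.1⁻¹, p.1 * (1 + p.1 * p.2)) := by
  ext i j
  fin_cases i <;> fin_cases j <;> simp [mul_apply, Fin.sum_univ_two] <;> field_simp
  ring

theorem antidiagSL_mul_uMat_mul_antidiagSL (hγ : 1 + p.1 * p.2 ≠ 0) :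
    antidiagSL (1 + p.1 * p.2)⁻¹ (inv_ne_zero hγ) * uMat p *
        antidiagSL (-1) (neg_ne_zero.2 one_ne_zero) =
      uMat (-p.2 * (1 + p.1 * p.2)⁻¹, -p.1 * (1 + p.1 * p.2)) := by
  ext i j
  fin_cases i <;> fin_cases j <;> simp [mul_apply, Fin.sum_univ_two] <;> field_simp
  ring

end Witnesses

variable (K) in
def monomialSubgroup : Subgroup (SL(2, K)) where
  carrier := {A | IsMonomial A}
  one_mem' := .inl (by simp)
  mul_mem' := IsMonomial.mul
  inv_mem' := IsMonomial.inv

theorem doubleCoset_rel_uMat_iff {p q : K × K} :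
    DoubleCoset.setoid (monomialSubgroup K : Set _) (monomialSubgroup K) (uMat p) (uMat q) ↔
      ∃ n₁ n₂ : SL(2, K), IsMonomial n₁ ∧ IsMonomial n₂ ∧ n₁ * uMat p * n₂ = uMat q := by
  rw [DoubleCoset.rel_iff]
  exact ⟨fun ⟨n₁, h₁, n₂, h₂, h⟩ ↦ ⟨n₁, n₂, h₁, h₂, h.symm⟩,
    fun ⟨n₁, n₂, h₁, h₂, h⟩ ↦ ⟨n₁, h₁, n₂, h₂, h.symm⟩⟩

theorem Rstep.doubleCoset_rel {p q : K × K} (h : Rstep p q) :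
    DoubleCoset.setoid (monomialSubgroup K : Set _) (monomialSubgroup K) (uMat p) (uMat q) := by
  rw [doubleCoset_rel_uMat_iff]
  rcases h with ⟨s, hs, rfl⟩ | ⟨hβ, rfl⟩ | ⟨hα, rfl⟩ | ⟨hγ, rfl⟩
  · exact ⟨_, _, .inl (isDiagonal_diagSL _ _), .inl (isDiagonal_diagSL _ _),
      diagSL_mul_uMat_mul_diagSL p hs⟩
  · exact ⟨_, 1, .inr (isAntidiagonal_antidiagSL _ _), .inl (by simp),
      (mul_one _).trans (antidiagSL_mul_uMat p hβ)⟩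
  · exact ⟨_, _, .inl (isDiagonal_diagSL _ _), .inr (isAntidiagonal_antidiagSL _ _),
      diagSL_mul_uMat_mul_antidiagSL p hα⟩
  · exact ⟨_, _, .inr (isAntidiagonal_antidiagSL _ _), .inr (isAntidiagonal_antidiagSL _ _),
      antidiagSL_mul_uMat_mul_antidiagSL p hγ⟩

theorem IsDiagonal.exists_eq_diagSL {A : SL(2, K)} (hA : IsDiagonal A) :
    ∃ s hs, A = diagSL s hs := by
  have hdet : A 0 0 * A 1 1 = 1 := by
    simpa [hA.1, hA.2] using (det_fin_two (A : Matrix (Fin 2) (Fin 2) K)).symm.trans A.2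
  refine ⟨A 0 0, left_ne_zero_of_mul_eq_one hdet, ?_⟩
  ext i j
  fin_cases i <;> fin_cases j <;> simp [diagSL, hA.1, hA.2, eq_inv_of_mul_eq_one_right hdet]

theorem rstep_of_isDiagonal {p q : K × K} {n₁ n₂ : SL(2, K)} (h₁ : IsDiagonal n₁)
    (h₂ : IsDiagonal n₂) (h : n₁ * uMat p * n₂ = uMat q) : Rstep p q := by
  obtain ⟨a, ha, rfl⟩ := h₁.exists_eq_diagSL
  obtain ⟨b, hb, rfl⟩ := h₂.exists_eq_diagSL
  have hab : a * b = 1 := by simpa [mul_apply, Fin.sum_univ_two] using congr_arg (· 0 0) h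
  obtain rfl := eq_inv_of_mul_eq_one_right hab
  rw [diagSL_mul_uMat_mul_diagSL] at h
  exact Or.inl ⟨a, ha, (uMat_injective h).symm⟩

theorem eqvGen_rstep_of_rstep_of_isDiagonal {p q r : K × K} {m₁ m₂ n₁ n₂ : SL(2, K)}
    (hpq : Rstep p q) (hm : m₁ * uMat p * m₂ = uMat q) (h₁ : IsDiagonal (n₁ * m₁⁻¹))
    (h₂ : IsDiagonal (m₂⁻¹ * n₂)) (hn : n₁ * uMat p * n₂ = uMat r) :
    Relation.EqvGen Rstep p r :=
  .trans _ _ _ (.rel _ _ hpq) <| .rel _ _ <| rstep_of_isDiagonal h₁ h₂ <| by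
    rw [← hm, ← hn]; group

theorem eqvGen_rstep_of_isMonomial {p q : K × K} {n₁ n₂ : SL(2, K)}
    (h₁ : IsMonomial n₁) (h₂ : IsMonomial n₂) (h : n₁ * uMat p * n₂ = uMat q) :
    Relation.EqvGen Rstep p q := by
  have h00 : (n₁ * uMat p * n₂) 0 0 = 1 := by rw [h]; rfl
  rcases isMonomial_iff.1 h₁ with d₁ | a₁ <;> rcases isMonomial_iff.1 h₂ with d₂ | a₂
  · exact .rel _ _ (rstep_of_isDiagonal d₁ d₂ h)
  · have hα : p.1 ≠ 0 := by
      rintro h0; simp [mul_apply, Fin.sum_univ_two, d₁.1, a₂.1, h0] at h00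
    exact eqvGen_rstep_of_rstep_of_isDiagonal (Or.inr (Or.inr (Or.inl ⟨hα, rfl⟩)))
      (diagSL_mul_uMat_mul_antidiagSL p hα) (d₁.mul (isDiagonal_diagSL _ _).inv)
      ((isAntidiagonal_antidiagSL _ _).inv.mul a₂) h
  · have hβ : p.2 ≠ 0 := by
      rintro h0; simp [mul_apply, Fin.sum_univ_two, a₁.1, d₂.2, h0] at h00
    exact eqvGen_rstep_of_rstep_of_isDiagonal (Or.inr (Or.inl ⟨hβ, rfl⟩))
      ((mul_one _).trans (antidiagSL_mul_uMat p hβ))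
      (a₁.mul (isAntidiagonal_antidiagSL _ _).inv) (by simpa using d₂) h
  · have hγ : 1 + p.1 * p.2 ≠ 0 := by
      rintro h0; simp [mul_apply, Fin.sum_univ_two, a₁.1, a₂.1, h0] at h00
    exact eqvGen_rstep_of_rstep_of_isDiagonal (Or.inr (Or.inr (Or.inr ⟨hγ, rfl⟩)))
      (antidiagSL_mul_uMat_mul_antidiagSL p hγ) (a₁.mul (isAntidiagonal_antidiagSL _ _).inv)
      ((isAntidiagonal_antidiagSL _ _).inv.mul a₂) h

end

/-- `u(α,β)` and `u(α',β')` lie in the same double coset `N g N` (where `N` is the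
subgroup of monomial matrices) iff `(α,β)` and `(α',β')` are 𝒩-equivalent. -/
theorem double_coset_iff_N_equivalent {K : Type*} [Field K] (p p' : K × K) :
    (∃ n₁ n₂ : SpecialLinearGroup (Fin 2) K,
        IsMonomial n₁ ∧ IsMonomial n₂ ∧ n₁ * uMat p * n₂ = uMat p') ↔
      Relation.EqvGen Rstep p p' := by
  refine ⟨fun ⟨n₁, n₂, h₁, h₂, h⟩ ↦ eqvGen_rstep_of_isMonomial h₁ h₂ h, fun h ↦ ?_⟩
  rw [← doubleCoset_rel_uMat_iff]
  exact ((DoubleCoset.setoid _ _).comap uMat).iseqv.eqvGen_iff.1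
    (h.mono fun _ _ ↦ Rstep.doubleCoset_rel)
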